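/- Assume Hypotheses 1 and 2. Then every C^1 classical solution of the stationary master equation is a monotone solution of the stationary master equation. -/

import Mathlib

open scoped RealInnerProductSpace
noncomputable section

/-- `ℝ^d` with the Euclidean inner product. -/
abbrev Euc (d : ℕ) := EuclideanSpace ℝ (Fin d)

/-- The positive orthant `O_d = (ℝ≥0)^d`. -/
def Od (d : ℕ) : Set (Euc d) := {x | ∀ i, 0 ≤ x i}

/-- `B_R = {x ∈ O_d : x_1 + ... + x_d ≤ R}`. -/
def Ball1 (d : ℕ) (R : ℝ) : Set (Euc d) := {x | x ∈ Od d ∧ ∑ i, x i ≤ R}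

/-- Classical solution of the stationary master equation. -/
def IsClassicalSolS (d : ℕ) (F G : Euc d → Euc d → Euc d) (r lam : ℝ)
    (T : Euc d →L[ℝ] Euc d) (U : Euc d → Euc d) : Prop :=
  ContDiff ℝ 1 U ∧
  ∀ x ∈ Od d, ∀ i,
    r * U x i + fderiv ℝ (fun z : Euc d => U z i) x (F x (U x))
      + lam * (U x i - ContinuousLinearMap.adjoint T (U (T x)) i)
      = G x (U x) i

/-- Monotone solution of the stationary master equation (Definition 2.1), with threshold
`R₁ ≥ R₀` where `R₀` is the constant of Hypothesis 2. -/
def IsMonotoneSolS (d : ℕ) (F G : Euc d → Euc d → Euc d) (r lam : ℝ)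
    (T : Euc d →L[ℝ] Euc d) (R₀ : ℝ) (U : Euc d → Euc d) : Prop :=
  ContinuousOn U (Od d) ∧
  ∃ R₁ ≥ R₀, ∀ R ≥ R₁, ∀ V : Euc d, ∀ y ∈ Od d, ∀ x₀ ∈ Ball1 d R,
    (∀ x ∈ Ball1 d R, x ≠ x₀ → ⟪U x₀ - V, x₀ - y⟫ < ⟪U x - V, x - y⟫) →
    ⟪G x₀ (U x₀), x₀ - y⟫ + ⟪F x₀ (U x₀), U x₀ - V⟫ ≤
      r * ⟪U x₀, x₀ - y⟫
        + lam * ⟪U x₀ - ContinuousLinearMap.adjoint T (U (T x₀)), x₀ - y⟫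

/-!
At a minimiser `x₀` of `x ↦ ⟪U x - V, x - y⟫` over `B_R`, Hypotheses 1 and 2 on `F` (with
`R ≥ R₀`) say that `-F(x₀, U x₀)` points into `B_R`, so the first-order optimality condition gives
`⟪F, U x₀ - V⟫ + ⟪DU(x₀) F, x₀ - y⟫ ≤ 0`. Pairing the master equation with `x₀ - y` trades
`⟪DU(x₀) F, x₀ - y⟫` for the remaining terms, which is exactly the monotone-solution inequality.
-/

open Filter Topology

lemma eventually_add_mul_le {a b c : ℝ} (hac : a ≤ c) (hb : a = c → b ≤ 0) :
    ∀ᶠ t in 𝓝[>] (0 : ℝ), a + t * b ≤ c := by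
  rcases hac.lt_or_eq with hlt | heq
  · have hcont : Tendsto (fun t : ℝ => a + t * b) (𝓝 0) (𝓝 (a + 0 * b)) :=
      (continuous_const.add (continuous_id.mul continuous_const)).tendsto 0
    rw [zero_mul, add_zero] at hcont
    exact nhdsWithin_le_nhds ((hcont.eventually (eventually_lt_nhds hlt)).mono fun _ => le_of_lt)
  · filter_upwards [self_mem_nhdsWithin] with t (ht : 0 < t)
    nlinarith [mul_nonpos_of_nonneg_of_nonpos ht.le (hb heq)]

lemma eventually_add_smul_mem_ball1 {d : ℕ} {R : ℝ} {x v : Euc d} (hx : x ∈ Ball1 d R)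
    (hv : ∀ i, x i = 0 → 0 ≤ v i) (hvsum : ∑ i, x i = R → ∑ i, v i ≤ 0) :
    ∀ᶠ t in 𝓝[>] (0 : ℝ), x + t • v ∈ Ball1 d R := by
  have hcoord : ∀ i, ∀ᶠ t in 𝓝[>] (0 : ℝ), -x i + t * -v i ≤ 0 := fun i =>
    eventually_add_mul_le (neg_nonpos.2 (hx.1 i))
      fun h => neg_nonpos.2 (hv i (neg_eq_zero.1 h))
  have hsum : ∀ᶠ t in 𝓝[>] (0 : ℝ), ∑ i, x i + t * ∑ i, v i ≤ R :=
    eventually_add_mul_le hx.2 hvsum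
  filter_upwards [eventually_all.2 hcoord, hsum] with t hcoord hsum
  refine ⟨fun i => ?_, ?_⟩
  · simp only [PiLp.add_apply, PiLp.smul_apply, smul_eq_mul]
    linarith [hcoord i]
  · simpa [Finset.sum_add_distrib, Finset.mul_sum] using hsum

lemma mem_posTangentConeAt_ball1 {d : ℕ} {R : ℝ} {x v : Euc d} (hx : x ∈ Ball1 d R)
    (hv : ∀ i, x i = 0 → 0 ≤ v i) (hvsum : ∑ i, x i = R → ∑ i, v i ≤ 0) :
    v ∈ posTangentConeAt (Ball1 d R) x :=
  mem_posTangentConeAt_of_frequently_mem (eventually_add_smul_mem_ball1 hx hv hvsum).frequently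

lemma fderiv_inner_sub_nonneg_of_isMinOn {E : Type*} [NormedAddCommGroup E]
    [InnerProductSpace ℝ E] {U : E → E} {V y x₀ v : E} {s : Set E}
    (hU : DifferentiableAt ℝ U x₀) (hmin : IsMinOn (fun x => ⟪U x - V, x - y⟫) s x₀)
    (hv : v ∈ posTangentConeAt s x₀) :
    0 ≤ ⟪U x₀ - V, v⟫ + ⟪fderiv ℝ U x₀ v, x₀ - y⟫ := by
  have hderiv := (hU.hasFDerivAt.sub_const V).inner ℝ ((hasFDerivAt_id x₀).sub_const y)
  simpa using hmin.localize.hasFDerivWithinAt_nonneg hderiv.hasFDerivWithinAt hv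

lemma fderiv_euclidean_apply {ι E : Type*} [Fintype ι] [NormedAddCommGroup E]
    [NormedSpace ℝ E] {U : E → EuclideanSpace ℝ ι} {x : E} (hU : DifferentiableAt ℝ U x)
    (i : ι) (w : E) : fderiv ℝ (fun z => U z i) x w = fderiv ℝ U x w i := by
  have hcomp : HasFDerivAt (fun z => U z i) (EuclideanSpace.proj i ∘L fderiv ℝ U x) x :=
    (EuclideanSpace.proj i : EuclideanSpace ℝ ι →L[ℝ] ℝ).hasFDerivAt.comp x hU.hasFDerivAt
  rw [hcomp.fderiv]
  rfl

lemma IsClassicalSolS.inner_eq {d : ℕ} {F G : Euc d → Euc d → Euc d} {r lam : ℝ}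
    {T : Euc d →L[ℝ] Euc d} {U : Euc d → Euc d} (hU : IsClassicalSolS d F G r lam T U)
    {x : Euc d} (hx : x ∈ Od d) (w : Euc d) :
    ⟪G x (U x), w⟫ = r * ⟪U x, w⟫ + ⟪fderiv ℝ U x (F x (U x)), w⟫
      + lam * ⟪U x - ContinuousLinearMap.adjoint T (U (T x)), w⟫ := by
  have hvec : G x (U x) = r • U x + fderiv ℝ U x (F x (U x))
      + lam • (U x - ContinuousLinearMap.adjoint T (U (T x))) := by
    ext i
    rw [← hU.2 x hx i, fderiv_euclidean_apply ((hU.1.differentiable one_ne_zero) x)]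
    simp
  rw [hvec, inner_add_left, inner_add_left, real_inner_smul_left, real_inner_smul_left]

theorem classical_implies_monotone_stationary_general
    (d : ℕ)
    (F G : Euc d → Euc d → Euc d)
    (r lam : ℝ) (T : Euc d →L[ℝ] Euc d)
    -- Hypothesis 1
    (hyp1F : ∀ x ∈ Od d, ∀ p : Euc d, ∀ i, x i = 0 → F x p i ≤ 0)
    -- Hypothesis 2
    (R₀ : ℝ)
    (hyp2F : ∀ x ∈ Od d, ∀ p : Euc d, R₀ ≤ ∑ i, x i → 0 ≤ ∑ i, F x p i)
    (U : Euc d → Euc d) (hU : IsClassicalSolS d F G r lam T U) :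
    IsMonotoneSolS d F G r lam T R₀ U := by
  refine ⟨hU.1.continuous.continuousOn, R₀, le_refl R₀, fun R hR V y _ x₀ hx₀ hstrict => ?_⟩
  have hmin : IsMinOn (fun x => ⟪U x - V, x - y⟫) (Ball1 d R) x₀ :=
    isMinOn_iff.2 fun x hx => by
      rcases eq_or_ne x x₀ with rfl | hne
      exacts [le_rfl, (hstrict x hx hne).le]
  have hinward : -F x₀ (U x₀) ∈ posTangentConeAt (Ball1 d R) x₀ := by
    refine mem_posTangentConeAt_ball1 hx₀ (fun i hi => ?_) (fun hsum => ?_)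
    · simpa using hyp1F x₀ hx₀.1 (U x₀) i hi
    · simpa using hyp2F x₀ hx₀.1 (U x₀) (hsum ▸ hR)
  have hslope := fderiv_inner_sub_nonneg_of_isMinOn
    (hU.1.differentiable one_ne_zero x₀) hmin hinward
  rw [map_neg, inner_neg_right, inner_neg_left, real_inner_comm] at hslope
  rw [hU.inner_eq hx₀.1]
  linarith

/-- Under Hypotheses 1 and 2, every C¹ classical solution of the stationary master equation is
a monotone solution of the stationary master equation. -/
theorem classical_implies_monotone_stationary
    (d : ℕ) (hd : 1 ≤ d)
    (F G : Euc d → Euc d → Euc d)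
    (hFc : Continuous fun q : Euc d × Euc d => F q.1 q.2)
    (hGc : Continuous fun q : Euc d × Euc d => G q.1 q.2)
    (r lam : ℝ) (hr : 0 < r) (hlam : 0 ≤ lam) (T : Euc d →L[ℝ] Euc d)
    -- Hypothesis 1
    (hyp1F : ∀ x ∈ Od d, ∀ p : Euc d, ∀ i, x i = 0 → F x p i ≤ 0)
    (hyp1T : ∀ x ∈ Od d, T x ∈ Od d)
    -- Hypothesis 2
    (R₀ : ℝ) (hR₀ : 0 < R₀)
    (hyp2F : ∀ x ∈ Od d, ∀ p : Euc d, R₀ ≤ ∑ i, x i → 0 ≤ ∑ i, F x p i)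
    (hyp2T : ∀ R ≥ R₀, ∀ x ∈ Ball1 d R, T x ∈ Ball1 d R)
    (U : Euc d → Euc d) (hU : IsClassicalSolS d F G r lam T U) :
    IsMonotoneSolS d F G r lam T R₀ U :=
  classical_implies_monotone_stationary_general d F G r lam T hyp1F R₀ hyp2F U hU
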